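/- Let k be a non-negative integer and let P be a finite propositional logic program. Then P has a stable model of size at most k if and only if the propositional theory T(P) has a model of size at most (k+1)(k²+2k). -/

import Mathlib

open scoped Classical

noncomputable section

/-- A propositional logic program rule: a head atom, a finite positive body and a
finite negative body. -/
structure LPRule (α : Type) where
  head : α
  pos : Finset α
  neg : Finset α
deriving DecidableEq

/-- A logic program is a finite set of rules. -/
abbrev LProgram (α : Type) := Finset (LPRule α)

variable {α : Type} [DecidableEq α]

/-- `horn r`: the Horn rule with the same head and positive body as `r`
and empty negative body. -/
def LPRule.horn (r : LPRule α) : LPRule α := ⟨r.head, r.pos, ∅⟩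

/-- A rule `r` is proper if `h(r) ∉ b⁺(r)` and `b⁺(r) ∩ b⁻(r) = ∅`. -/
def LPRule.proper (r : LPRule α) : Prop := r.head ∉ r.pos ∧ r.pos ∩ r.neg = ∅

/-- `At(P)`: the set of atoms occurring in `P`. -/
def atomsP (P : LProgram α) : Finset α := P.sup (fun r => insert r.head (r.pos ∪ r.neg))

/-- `h(P)`: the set of heads of rules of `P`. -/
def headsP (P : LProgram α) : Finset α := P.image LPRule.head

/-- `Neg(P)`: the set of atoms occurring negated in `P`. -/
def negP (P : LProgram α) : Finset α := P.sup LPRule.neg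

/-- The least model of a (Horn) program `Q`, given as a set of rules (negative bodies
are ignored; Horn rules have empty negative bodies): the least set `M` of atoms such
that `h(r) ∈ M` whenever `r ∈ Q` and `b⁺(r) ⊆ M`. -/
def LM (Q : Set (LPRule α)) : Set α :=
  ⋂₀ {M : Set α | ∀ r ∈ Q, (↑r.pos : Set α) ⊆ M → r.head ∈ M}

/-- The reduct `P^S`: delete every rule whose negative body meets `S` and remove the
negative bodies of the remaining rules. -/
def reduct (P : LProgram α) (S : Set α) : Set (LPRule α) :=
  LPRule.horn '' {r | r ∈ P ∧ (↑r.neg : Set α) ∩ S = ∅}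

/-- `M` is a stable model of `P` if `M = LM (P^M)`. -/
def isStable (P : LProgram α) (M : Set α) : Prop :=
  M = LM (reduct P M)

/-- The propositional atoms of the encoding `T(P)`: for each program atom `q`,
atoms `c(q)`, `c(q,i)`, `c⁻(q,i)` and `d(q,i)`. -/
inductive EncAtom (α : Type) where
  | c : α → EncAtom α
  | ci : α → ℕ → EncAtom α
  | cm : α → ℕ → EncAtom α
  | d : α → ℕ → EncAtom α
deriving DecidableEq

/-- `U` satisfies `F₁(q,i) = c⁻(q,i) ↔ (c(q,1) ∨ … ∨ c(q,i-1))`. -/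
def SatF1 (U : Set (EncAtom α)) (q : α) (i : ℕ) : Prop :=
  EncAtom.cm q i ∈ U ↔ ∃ j, 1 ≤ j ∧ j ≤ i - 1 ∧ EncAtom.ci q j ∈ U

/-- `U` satisfies `F₂(q) = c(q) ↔ (c(q,1) ∨ … ∨ c(q,k+1))`. -/
def SatF2 (k : ℕ) (U : Set (EncAtom α)) (q : α) : Prop :=
  EncAtom.c q ∈ U ↔ ∃ j, 1 ≤ j ∧ j ≤ k + 1 ∧ EncAtom.ci q j ∈ U

/-- `U` satisfies `F₃(r,i)`; for `i ≥ 2` this is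
`c⁻(a₁,i) ∧ … ∧ c⁻(a_s,i) ∧ ¬c(b₁) ∧ … ∧ ¬c(b_t) ∧ ¬c⁻(q,i)`, for `i = 1` it is
`false` when `b⁺(r) ≠ ∅` and `¬c(b₁) ∧ … ∧ ¬c(b_t)` when `b⁺(r) = ∅`. -/
def SatF3 (U : Set (EncAtom α)) (r : LPRule α) (i : ℕ) : Prop :=
  if i = 1 then r.pos = ∅ ∧ ∀ b ∈ r.neg, EncAtom.c b ∉ U
  else (∀ a ∈ r.pos, EncAtom.cm a i ∈ U) ∧ (∀ b ∈ r.neg, EncAtom.c b ∉ U) ∧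
    EncAtom.cm r.head i ∉ U

/-- `U` satisfies `F₄(q,i) = c(q,i) ↔ (F₃(r₁,i) ∨ … ∨ F₃(r_v,i))`, where
`r₁,…,r_v` are all rules of `P` with head `q`. -/
def SatF4 (P : LProgram α) (U : Set (EncAtom α)) (q : α) (i : ℕ) : Prop :=
  EncAtom.ci q i ∈ U ↔ ∃ r ∈ P, r.head = q ∧ SatF3 U r i

/-- `U` is a model of the theory `T₀(P)`. -/
def ModelT0 (k : ℕ) (P : LProgram α) (U : Set (EncAtom α)) : Prop :=
  (∀ q ∈ atomsP P, ∀ i, 2 ≤ i → i ≤ k + 1 → SatF1 U q i) ∧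
  (∀ q ∈ atomsP P, SatF2 k U q) ∧
  (∀ q ∈ atomsP P, ∀ i, 1 ≤ i → i ≤ k + 1 → SatF4 P U q i)

/-- `M(U) = {q ∈ At(P) : c(q) ∈ U}`. -/
def MU (P : LProgram α) (U : Set (EncAtom α)) : Finset α :=
  (atomsP P).filter (fun q => EncAtom.c q ∈ U)

/-- `U` is a model of the theory `T(P) = T₀(P) ∪ {c(q) ↔ d(q,i) : q ∈ At(P), 1 ≤ i ≤ k²+2k}`. -/
def ModelT (k : ℕ) (P : LProgram α) (U : Set (EncAtom α)) : Prop :=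
  ModelT0 k P U ∧
  ∀ q ∈ atomsP P, ∀ i, 1 ≤ i → i ≤ k ^ 2 + 2 * k →
    (EncAtom.c q ∈ U ↔ EncAtom.d q i ∈ U)
set_option linter.unusedSectionVars false
set_option linter.unnecessarySimpa false

/-! ### Auxiliary infrastructure -/

lemma head_mem_atomsP {P : LProgram α} {r : LPRule α} (h : r ∈ P) : r.head ∈ atomsP P :=
  Finset.le_sup (f := fun r : LPRule α => insert r.head (r.pos ∪ r.neg)) h
    (Finset.mem_insert_self _ _)

lemma pos_mem_atomsP {P : LProgram α} {r : LPRule α} (h : r ∈ P) {a : α} (ha : a ∈ r.pos) :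
    a ∈ atomsP P :=
  Finset.le_sup (f := fun r : LPRule α => insert r.head (r.pos ∪ r.neg)) h
    (Finset.mem_insert_of_mem (Finset.mem_union_left _ ha))

lemma neg_mem_atomsP {P : LProgram α} {r : LPRule α} (h : r ∈ P) {a : α} (ha : a ∈ r.neg) :
    a ∈ atomsP P :=
  Finset.le_sup (f := fun r : LPRule α => insert r.head (r.pos ∪ r.neg)) h
    (Finset.mem_insert_of_mem (Finset.mem_union_right _ ha))

lemma LM_subset {Q : Set (LPRule α)} {X : Set α}
    (h : ∀ r ∈ Q, (↑r.pos : Set α) ⊆ X → r.head ∈ X) : LM Q ⊆ X :=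
  Set.sInter_subset_of_mem h

lemma LM_closed {Q : Set (LPRule α)} {r : LPRule α} (hr : r ∈ Q)
    (h : (↑r.pos : Set α) ⊆ LM Q) : r.head ∈ LM Q := by
  intro X hX
  exact hX r hr (fun a ha => (h ha) X hX)

/-- One step of forward chaining. -/
def step (Q : Set (LPRule α)) (X : Set α) : Set α :=
  X ∪ {a | ∃ r ∈ Q, r.head = a ∧ (↑r.pos : Set α) ⊆ X}

/-- Iterated forward chaining. -/
def iter (Q : Set (LPRule α)) : ℕ → Set α
  | 0 => ∅
  | n + 1 => step Q (iter Q n)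

lemma iter_succ_subset {Q : Set (LPRule α)} {n : ℕ} : iter Q n ⊆ iter Q (n + 1) :=
  Set.subset_union_left

lemma iter_mono {Q : Set (LPRule α)} {n m : ℕ} (h : n ≤ m) : iter Q n ⊆ iter Q m := by
  induction m with
  | zero => simpa [Nat.le_zero.mp h] using subset_rfl
  | succ m ih =>
    rcases Nat.lt_or_ge n (m+1) with h' | h'
    · exact (ih (Nat.lt_succ_iff.mp h')).trans iter_succ_subset
    · have : n = m + 1 := le_antisymm h h'
      subst this; exact subset_rfl

lemma head_mem_iter {Q : Set (LPRule α)} {r : LPRule α} {n : ℕ} (hr : r ∈ Q)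
    (h : (↑r.pos : Set α) ⊆ iter Q n) : r.head ∈ iter Q (n + 1) :=
  Or.inr ⟨r, hr, rfl, h⟩

lemma mem_iter_succ_elim {Q : Set (LPRule α)} {q : α} {n : ℕ} (h : q ∈ iter Q (n + 1)) :
    q ∈ iter Q n ∨ ∃ r ∈ Q, r.head = q ∧ (↑r.pos : Set α) ⊆ iter Q n := h

lemma iter_subset_LM {Q : Set (LPRule α)} : ∀ n, iter Q n ⊆ LM Q := by
  intro n
  induction n with
  | zero => simp [iter]
  | succ n ih =>
    rintro q (hq | ⟨r, hr, rfl, hpos⟩)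
    · exact ih hq
    · exact LM_closed hr (hpos.trans ih)

lemma LM_eq_iter_of_fix {Q : Set (LPRule α)} {n : ℕ} (h : iter Q (n + 1) = iter Q n) :
    LM Q = iter Q n := by
  refine le_antisymm ?_ (iter_subset_LM n)
  refine LM_subset (fun r hr hpos => ?_)
  have := head_mem_iter hr hpos
  rwa [h] at this

lemma LM_eq_iter_card {Q : Set (LPRule α)} {M : Finset α} (h : LM Q = ↑M) :
    LM Q = iter Q M.card := by
  have key : ∀ n : ℕ, LM Q = iter Q n ∨ n ≤ (M.filter (fun a => a ∈ iter Q n)).card := by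
    intro n
    induction n with
    | zero => exact Or.inr (Nat.zero_le _)
    | succ n ih =>
      rcases ih with hfix | hle
      · left
        have : iter Q (n + 1) = iter Q n := by
          refine le_antisymm ?_ iter_succ_subset
          rintro q (hq | ⟨r, hr, rfl, hpos⟩)
          · exact hq
          · rw [← hfix] at hpos ⊢; exact LM_closed hr hpos
        exact hfix.trans this.symm
      · by_cases heq : iter Q (n + 1) = iter Q n
        · left
          rw [heq]
          exact LM_eq_iter_of_fix heq
        · right
          obtain ⟨x, hx1, hx2⟩ : ∃ x, x ∈ iter Q (n+1) ∧ x ∉ iter Q n := by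
            by_contra hc
            push_neg at hc
            exact heq (le_antisymm hc iter_succ_subset)
          have hxM : x ∈ M := by
            have := iter_subset_LM (Q := Q) (n+1) hx1
            rwa [h] at this
          have hsub : M.filter (fun a => a ∈ iter Q n) ⊆ M.filter (fun a => a ∈ iter Q (n+1)) := by
            intro a ha
            simp only [Finset.mem_filter] at ha ⊢
            exact ⟨ha.1, iter_succ_subset ha.2⟩
          have hlt : (M.filter (fun a => a ∈ iter Q n)).card <
              (M.filter (fun a => a ∈ iter Q (n+1))).card := by
            refine Finset.card_lt_card ?_
            refine Finset.ssubset_iff_of_subset hsub |>.mpr ?_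
            exact ⟨x, by simp [hxM, hx1], by simp [hx2]⟩
          omega
  rcases key M.card with hfix | hle
  · exact hfix
  · have hsub : M.filter (fun a => a ∈ iter Q M.card) ⊆ M := Finset.filter_subset _ _
    have heq : M.filter (fun a => a ∈ iter Q M.card) = M :=
      Finset.eq_of_subset_of_card_le hsub hle
    refine le_antisymm ?_ (iter_subset_LM _)
    rw [h]
    intro a ha
    have haM : a ∈ M := ha
    have hmem : a ∈ M.filter (fun a => a ∈ iter Q M.card) := by rw [heq]; exact haM
    exact (Finset.mem_filter.mp hmem).2
/-- Minimal derivation stage of an atom. -/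
def lvl (Q : Set (LPRule α)) (q : α) : ℕ := sInf {n | q ∈ iter Q n}

lemma reduct_mem {P : LProgram α} {S : Set α} {r : LPRule α}
    (hr : r ∈ P) (hneg : (↑r.neg : Set α) ∩ S = ∅) : r.horn ∈ reduct P S :=
  ⟨r, ⟨hr, hneg⟩, rfl⟩

lemma forward {k : ℕ} {P : LProgram α} {M : Finset α}
    (hst : isStable P ↑M) (hcard : M.card ≤ k) :
    ∃ U : Finset (EncAtom α), ModelT k P ↑U ∧ U.card ≤ (k + 1) * (k ^ 2 + 2 * k) := by
  classical
  set Q : Set (LPRule α) := reduct P ↑M with hQ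
  have hLM : LM Q = ↑M := hst.symm
  have hiter : LM Q = iter Q M.card := LM_eq_iter_card hLM
  -- basic facts about lvl for atoms of M
  have hiterM : ∀ n, iter Q n ⊆ ↑M := fun n => (iter_subset_LM n).trans (le_of_eq hLM)
  have hmemlvl : ∀ q ∈ M, q ∈ iter Q (lvl Q q) := by
    intro q hq
    have : q ∈ iter Q M.card := by rw [← hiter, hLM]; exact hq
    exact Nat.sInf_mem (s := {n | q ∈ iter Q n}) ⟨M.card, this⟩
  have hlvl_le : ∀ q n, q ∈ iter Q n → lvl Q q ≤ n := fun q n h => Nat.sInf_le h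
  have hlvl_pos : ∀ q ∈ M, 1 ≤ lvl Q q := by
    intro q hq
    by_contra hlt
    have h0 : lvl Q q = 0 := by omega
    have := hmemlvl q hq
    rw [h0] at this
    exact this.elim
  have hlvl_k : ∀ q ∈ M, lvl Q q ≤ k := by
    intro q hq
    have : q ∈ iter Q M.card := by rw [← hiter, hLM]; exact hq
    exact le_trans (hlvl_le q _ this) hcard
  have hnotmem : ∀ q, q ∉ iter Q (lvl Q q - 1) ∨ lvl Q q = 0 := by
    intro q
    rcases Nat.eq_zero_or_pos (lvl Q q) with h0 | hpos
    · exact Or.inr h0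
    · exact Or.inl (Nat.notMem_of_lt_sInf (show lvl Q q - 1 < lvl Q q by omega))
  -- the encoding finset
  set enc : α → Finset (EncAtom α) := fun q =>
    ({EncAtom.c q, EncAtom.ci q (lvl Q q)} : Finset (EncAtom α))
      ∪ (Finset.Icc (lvl Q q + 1) (k + 1)).image (EncAtom.cm q)
      ∪ (Finset.Icc 1 (k ^ 2 + 2 * k)).image (EncAtom.d q) with henc
  set U : Finset (EncAtom α) := M.biUnion enc with hU
  -- membership characterizations
  have hmemc : ∀ q : α, EncAtom.c q ∈ U ↔ q ∈ M := by
    intro q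
    simp [hU, henc]
  have hmemci : ∀ (q : α) (i : ℕ), EncAtom.ci q i ∈ U ↔ q ∈ M ∧ i = lvl Q q := by
    intro q i
    simp only [hU, henc]
    simp
  have hmemcm : ∀ (q : α) (i : ℕ),
      EncAtom.cm q i ∈ U ↔ q ∈ M ∧ lvl Q q < i ∧ i ≤ k + 1 := by
    intro q i
    simp only [hU, henc]
    simp
  have hmemd : ∀ (q : α) (i : ℕ),
      EncAtom.d q i ∈ U ↔ q ∈ M ∧ 1 ≤ i ∧ i ≤ k ^ 2 + 2 * k := by
    intro q i
    simp only [hU, henc]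
    simp
  refine ⟨U, ⟨⟨?_, ?_, ?_⟩, ?_⟩, ?_⟩
  · -- F1
    intro q hq i h2 hk1
    simp only [SatF1, Finset.mem_coe]
    constructor
    · intro h
      obtain ⟨hqM, hlt, _⟩ := (hmemcm q i).mp h
      exact ⟨lvl Q q, hlvl_pos q hqM, by omega, (hmemci q (lvl Q q)).mpr ⟨hqM, rfl⟩⟩
    · rintro ⟨j, hj1, hj2, hci⟩
      obtain ⟨hqM, rfl⟩ := (hmemci q j).mp hci
      exact (hmemcm q i).mpr ⟨hqM, by omega, hk1⟩
  · -- F2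
    intro q hq
    simp only [SatF2, Finset.mem_coe]
    constructor
    · intro h
      have hqM := (hmemc q).mp h
      exact ⟨lvl Q q, hlvl_pos q hqM, by have := hlvl_k q hqM; omega,
        (hmemci q (lvl Q q)).mpr ⟨hqM, rfl⟩⟩
    · rintro ⟨j, hj1, hj2, hci⟩
      exact (hmemc q).mpr ((hmemci q j).mp hci).1
  · -- F4
    intro q hq i hi1 hik
    simp only [SatF4, Finset.mem_coe]
    constructor
    · intro hci
      obtain ⟨hqM, rfl⟩ := (hmemci q i).mp hci
      have hlpos := hlvl_pos q hqM
      have hnm : q ∉ iter Q (lvl Q q - 1) := by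
        rcases hnotmem q with h | h
        · exact h
        · omega
      have hmem' : q ∈ iter Q (lvl Q q - 1 + 1) := by
        have he : lvl Q q - 1 + 1 = lvl Q q := by omega
        rw [he]; exact hmemlvl q hqM
      rcases mem_iter_succ_elim hmem' with h | ⟨r', hr'Q, hhead, hposs⟩
      · exact absurd h hnm
      obtain ⟨r, ⟨hrP, hnegM⟩, rfl⟩ := hr'Q
      have hhead' : r.head = q := hhead
      refine ⟨r, hrP, hhead', ?_⟩
      have hnegc : ∀ b ∈ r.neg, EncAtom.c b ∉ (↑U : Set (EncAtom α)) := by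
        intro b hb hc
        have hbM : b ∈ M := (hmemc b).mp hc
        have hmem2 : b ∈ (↑r.neg : Set α) ∩ ↑M := ⟨hb, hbM⟩
        rw [hnegM] at hmem2; exact hmem2
      have hposs' : (↑r.pos : Set α) ⊆ iter Q (lvl Q q - 1) := hposs
      by_cases h1 : lvl Q q = 1
      · rw [SatF3, if_pos h1]
        refine ⟨?_, hnegc⟩
        refine Finset.eq_empty_of_forall_notMem (fun a ha => ?_)
        have h0 : lvl Q q - 1 = 0 := by omega
        rw [h0] at hposs'
        exact (hposs' ha).elim
      · rw [SatF3, if_neg h1]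
        refine ⟨?_, hnegc, ?_⟩
        · intro a ha
          have haIter : a ∈ iter Q (lvl Q q - 1) := hposs' ha
          have haM : a ∈ M := hiterM _ haIter
          have hla := hlvl_le a _ haIter
          have hlk := hlvl_k q hqM
          exact (hmemcm a (lvl Q q)).mpr ⟨haM, by omega, by omega⟩
        · intro hcm
          obtain ⟨_, hlt, _⟩ := (hmemcm r.head (lvl Q q)).mp hcm
          rw [hhead'] at hlt
          omega
    · rintro ⟨r, hrP, rfl, hsat⟩
      refine Finset.mem_coe.mpr ((hmemci r.head i).mpr ?_)
      by_cases h1 : i = 1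
      · subst h1
        rw [SatF3, if_pos rfl] at hsat
        obtain ⟨hpos0, hneg⟩ := hsat
        have hnegM : (↑r.neg : Set α) ∩ ↑M = ∅ := by
          ext b
          simp only [Set.mem_inter_iff, Set.mem_empty_iff_false, iff_false, not_and]
          intro hb hbM
          exact hneg b hb ((hmemc b).mpr hbM)
        have hhorn : r.horn ∈ Q := reduct_mem hrP hnegM
        have hq1 : r.head ∈ iter Q (0 + 1) := by
          have := head_mem_iter (n := 0) hhorn (by simp [LPRule.horn, hpos0, iter])
          exact this
        have hqM : r.head ∈ M := hiterM _ hq1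
        exact ⟨hqM, by have := hlvl_le _ _ hq1; have := hlvl_pos _ hqM; omega⟩
      · rw [SatF3, if_neg h1] at hsat
        obtain ⟨hposU, hnegU, hcmq⟩ := hsat
        have hnegM : (↑r.neg : Set α) ∩ ↑M = ∅ := by
          ext b
          simp only [Set.mem_inter_iff, Set.mem_empty_iff_false, iff_false, not_and]
          intro hb hbM
          exact hnegU b hb ((hmemc b).mpr hbM)
        have hhorn : r.horn ∈ Q := reduct_mem hrP hnegM
        have hposIter : (↑r.horn.pos : Set α) ⊆ iter Q (i - 1) := by
          intro a ha
          obtain ⟨haM, hlt, _⟩ := (hmemcm a i).mp (hposU a ha)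
          exact iter_mono (by omega) (hmemlvl a haM)
        have hqi : r.head ∈ iter Q (i - 1 + 1) := by
          have := head_mem_iter hhorn hposIter
          exact this
        have he : i - 1 + 1 = i := by omega
        rw [he] at hqi
        have hqM : r.head ∈ M := hiterM _ hqi
        refine ⟨hqM, ?_⟩
        have hle : lvl Q r.head ≤ i := hlvl_le _ _ hqi
        by_contra hne
        exact hcmq ((hmemcm r.head i).mpr ⟨hqM, by omega, hik⟩)
  · -- d-formulas
    intro q hq i hi1 hi2
    constructor
    · intro h
      exact (hmemd q i).mpr ⟨(hmemc q).mp h, hi1, hi2⟩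
    · intro h
      exact (hmemc q).mpr ((hmemd q i).mp h).1
  · -- cardinality
    calc U.card ≤ ∑ q ∈ M, (enc q).card := Finset.card_biUnion_le
      _ ≤ ∑ _q ∈ M, (k ^ 2 + 3 * k + 2) := by
          refine Finset.sum_le_sum (fun q hq => ?_)
          rw [henc]
          refine le_trans (Finset.card_union_le _ _) ?_
          refine le_trans (Nat.add_le_add_right (Finset.card_union_le _ _) _) ?_
          have hb2 : ({EncAtom.c q, EncAtom.ci q (lvl Q q)} : Finset (EncAtom α)).card ≤ 2 :=
            Finset.card_le_two
          have hb3 : ((Finset.Icc (lvl Q q + 1) (k + 1)).image (EncAtom.cm q)).card ≤ k := by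
            refine le_trans (Finset.card_image_le) ?_
            rw [Nat.card_Icc]
            have := hlvl_pos q hq
            omega
          have hb4 : ((Finset.Icc 1 (k ^ 2 + 2 * k)).image (EncAtom.d q)).card
              ≤ k ^ 2 + 2 * k := by
            refine le_trans (Finset.card_image_le) ?_
            rw [Nat.card_Icc]
            omega
          omega
      _ = M.card * (k ^ 2 + 3 * k + 2) := by rw [Finset.sum_const, smul_eq_mul]
      _ ≤ k * (k ^ 2 + 3 * k + 2) := Nat.mul_le_mul_right _ hcard
      _ = (k + 1) * (k ^ 2 + 2 * k) := by ring
lemma backward {k : ℕ} {P : LProgram α} {U : Finset (EncAtom α)}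
    (hmod : ModelT k P ↑U) (hcard : U.card ≤ (k + 1) * (k ^ 2 + 2 * k)) :
    ∃ M : Finset α, (↑M : Set α) ⊆ ↑(atomsP P) ∧ isStable P ↑M ∧ M.card ≤ k := by
  classical
  obtain ⟨⟨hF1, hF2, hF4⟩, hD⟩ := hmod
  set M : Finset α := MU P ↑U with hM
  have hmemM : ∀ q, q ∈ M ↔ q ∈ atomsP P ∧ EncAtom.c q ∈ U := by
    intro q; simp [hM, MU]
  have hMatoms : ∀ q ∈ M, q ∈ atomsP P := fun q hq => ((hmemM q).mp hq).1
  have hMc : ∀ q ∈ M, EncAtom.c q ∈ U := fun q hq => ((hmemM q).mp hq).2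
  have hMsub : (↑M : Set α) ⊆ ↑(atomsP P) := by
    intro q hq; exact hMatoms q hq
  -- cardinality of M
  have hMk : M.card ≤ k := by
    set V : Finset (EncAtom α) :=
      M.biUnion (fun q => insert (EncAtom.c q)
        ((Finset.Icc 1 (k ^ 2 + 2 * k)).image (EncAtom.d q))) with hV
    have hVU : V ⊆ U := by
      intro x hx
      simp only [hV, Finset.mem_biUnion, Finset.mem_insert, Finset.mem_image,
        Finset.mem_Icc] at hx
      obtain ⟨q, hq, rfl | ⟨j, hj, rfl⟩⟩ := hx
      · exact hMc q hq
      · exact Finset.mem_coe.mp ((hD q (hMatoms q hq) j hj.1 hj.2).mp (hMc q hq))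
    have hVcard : V.card = M.card * (k ^ 2 + 2 * k + 1) := by
      rw [hV, Finset.card_biUnion]
      · have hone : ∀ q ∈ M, (insert (EncAtom.c q)
            ((Finset.Icc 1 (k ^ 2 + 2 * k)).image (EncAtom.d q))).card
            = k ^ 2 + 2 * k + 1 := by
          intro q hq
          rw [Finset.card_insert_of_notMem (by simp),
            Finset.card_image_of_injOn (by intro x hx y hy h; simpa using h),
            Nat.card_Icc]
          omega
        rw [Finset.sum_congr rfl hone, Finset.sum_const, smul_eq_mul]
      · intro x hx y hy hxy
        refine Finset.disjoint_left.mpr ?_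
        intro z hzx hzy
        simp only [Finset.mem_insert, Finset.mem_image, Finset.mem_Icc] at hzx hzy
        rcases hzx with rfl | ⟨j, _, rfl⟩ <;> rcases hzy with h | ⟨j', _, h⟩ <;> simp_all
    have hVle := Finset.card_le_card hVU
    have hlt : M.card * (k ^ 2 + 2 * k + 1) < (k + 1) * (k ^ 2 + 2 * k + 1) := by
      have h2 : (k + 1) * (k ^ 2 + 2 * k) < (k + 1) * (k ^ 2 + 2 * k + 1) := by nlinarith
      calc M.card * (k ^ 2 + 2 * k + 1) = V.card := hVcard.symm
        _ ≤ U.card := hVle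
        _ ≤ (k + 1) * (k ^ 2 + 2 * k) := hcard
        _ < (k + 1) * (k ^ 2 + 2 * k + 1) := h2
    have := Nat.lt_of_mul_lt_mul_right hlt
    omega
  -- level function from the encoding
  set lv : α → ℕ := fun q => sInf {j | 1 ≤ j ∧ j ≤ k + 1 ∧ EncAtom.ci q j ∈ U} with hlv
  have hlv_mem : ∀ q ∈ M, 1 ≤ lv q ∧ lv q ≤ k + 1 ∧ EncAtom.ci q (lv q) ∈ U := by
    intro q hq
    have hne : {j | 1 ≤ j ∧ j ≤ k + 1 ∧ EncAtom.ci q j ∈ U}.Nonempty := by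
      obtain ⟨j, hj⟩ := (hF2 q (hMatoms q hq)).mp (hMc q hq)
      exact ⟨j, hj⟩
    exact Nat.sInf_mem hne
  have hlv_min : ∀ q j, 1 ≤ j → j ≤ k + 1 → EncAtom.ci q j ∈ U → lv q ≤ j := by
    intro q j h1 h2 h3
    exact Nat.sInf_le ⟨h1, h2, h3⟩
  -- an atom with a ci-atom in range is in M
  have hciM : ∀ q ∈ atomsP P, ∀ j, 1 ≤ j → j ≤ k + 1 → EncAtom.ci q j ∈ U → q ∈ M := by
    intro q hq j h1 h2 h3
    exact (hmemM q).mpr ⟨hq, (hF2 q hq).mpr ⟨j, h1, h2, h3⟩⟩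
  -- positive body atoms from cm-atoms
  have hcmlv : ∀ a ∈ atomsP P, ∀ i, 2 ≤ i → i ≤ k + 1 → EncAtom.cm a i ∈ U →
      a ∈ M ∧ lv a ≤ i - 1 := by
    intro a ha i h2 hk h3
    obtain ⟨j, hj1, hj2, hjci⟩ := (hF1 a ha i h2 hk).mp h3
    have haM : a ∈ M := hciM a ha j hj1 (by omega) hjci
    exact ⟨haM, le_trans (hlv_min a j hj1 (by omega) hjci) hj2⟩
  -- negative body condition transfers
  have hnegM : ∀ r : LPRule α, r ∈ P → (∀ b ∈ r.neg, EncAtom.c b ∉ (↑U : Set (EncAtom α))) →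
      (↑r.neg : Set α) ∩ ↑M = ∅ := by
    intro r hr hneg
    ext b
    simp only [Set.mem_inter_iff, Set.mem_empty_iff_false, iff_false, not_and]
    intro hb hbM
    exact hneg b hb (hMc b hbM)
  have hnegU : ∀ r : LPRule α, r ∈ P → (↑r.neg : Set α) ∩ ↑M = ∅ →
      ∀ b ∈ r.neg, EncAtom.c b ∉ (↑U : Set (EncAtom α)) := by
    intro r hr hint b hb hc
    have hbM : b ∈ M := (hmemM b).mpr ⟨neg_mem_atomsP hr hb, hc⟩
    have : b ∈ (↑r.neg : Set α) ∩ ↑M := ⟨hb, hbM⟩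
    rw [hint] at this
    exact this
  -- density of levels
  have hdensity : ∀ q ∈ M, 2 ≤ lv q → ∃ a ∈ M, lv a = lv q - 1 := by
    intro q hq h2
    obtain ⟨hq1, hqk, hqci⟩ := hlv_mem q hq
    obtain ⟨r, hrP, hhead, hsat⟩ :=
      (hF4 q (hMatoms q hq) (lv q) hq1 hqk).mp hqci
    rw [SatF3, if_neg (by omega)] at hsat
    obtain ⟨hpos, hneg, hcm⟩ := hsat
    have hposM : ∀ a ∈ r.pos, a ∈ M ∧ 1 ≤ lv a ∧ lv a ≤ lv q - 1 := by
      intro a ha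
      have haA : a ∈ atomsP P := pos_mem_atomsP hrP ha
      obtain ⟨haM, hle⟩ := hcmlv a haA (lv q) h2 hqk (hpos a ha)
      exact ⟨haM, (hlv_mem a haM).1, hle⟩
    by_cases hex : ∃ a ∈ r.pos, lv a = lv q - 1
    · obtain ⟨a, ha, hae⟩ := hex
      exact ⟨a, (hposM a ha).1, hae⟩
    push_neg at hex
    have hall : ∀ a ∈ r.pos, lv a ≤ lv q - 2 := by
      intro a ha
      have := (hposM a ha).2.2
      have := hex a ha
      omega
    exfalso
    by_cases hi2 : lv q = 2
    · -- positive body must be empty; rule fires at level 1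
      have hpos0 : r.pos = ∅ := by
        refine Finset.eq_empty_of_forall_notMem (fun a ha => ?_)
        have := (hposM a ha).2.1
        have := hall a ha
        omega
      have hs1 : SatF3 (↑U) r 1 := by
        rw [SatF3, if_pos rfl]
        exact ⟨hpos0, hneg⟩
      have hci1 : EncAtom.ci q 1 ∈ U :=
        (hF4 q (hMatoms q hq) 1 le_rfl (by omega)).mpr ⟨r, hrP, hhead, hs1⟩
      have := hlv_min q 1 le_rfl (by omega) hci1
      omega
    · -- the rule fires at level lv q - 1 ≥ 2
      have hi3 : 3 ≤ lv q := by omega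
      have hs : SatF3 (↑U) r (lv q - 1) := by
        rw [SatF3, if_neg (by omega)]
        refine ⟨?_, hneg, ?_⟩
        · intro a ha
          obtain ⟨haM, hla1, _⟩ := hposM a ha
          have hlaci := (hlv_mem a haM).2.2
          refine (hF1 a (pos_mem_atomsP hrP ha) (lv q - 1) (by omega) (by omega)).mpr ?_
          exact ⟨lv a, hla1, by have := hall a ha; omega, hlaci⟩
        · intro hcmq
          obtain ⟨j, hj1, hj2, hjci⟩ :=
            (hF1 q (hMatoms q hq) (lv q - 1) (by omega) (by omega)).mp (by
              rw [hhead] at hcmq; exact hcmq)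
          have := hlv_min q j hj1 (by omega) hjci
          omega
      have hs' : SatF3 (↑U) r (lv q - 1) := hs
      have hci : EncAtom.ci q (lv q - 1) ∈ U :=
        (hF4 q (hMatoms q hq) (lv q - 1) (by omega) (by omega)).mpr ⟨r, hrP, hhead, hs'⟩
      have := hlv_min q (lv q - 1) (by omega) (by omega) hci
      omega
  -- all levels reached below any level
  have hD2 : ∀ i, ∀ q ∈ M, lv q = i → ∀ j, 1 ≤ j → j ≤ i → ∃ a ∈ M, lv a = j := by
    intro i
    induction i using Nat.strong_induction_on with
    | _ i ih =>
      intro q hq hlvq j hj1 hj2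
      by_cases hji : j = i
      · exact ⟨q, hq, hji ▸ hlvq⟩
      · have hjlt : j < i := by omega
        have h2 : 2 ≤ lv q := by omega
        obtain ⟨a, haM, hae⟩ := hdensity q hq h2
        have : lv a = i - 1 := by rw [hae, hlvq]
        exact ih (i - 1) (by omega) a haM this j hj1 (by omega)
  -- levels are at most k
  have hlvk : ∀ q ∈ M, lv q ≤ k := by
    intro q hq
    have hIcc : Finset.Icc 1 (lv q) ⊆ M.image lv := by
      intro j hj
      rw [Finset.mem_Icc] at hj
      obtain ⟨a, haM, hla⟩ := hD2 (lv q) q hq rfl j hj.1 hj.2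
      exact Finset.mem_image.mpr ⟨a, haM, hla⟩
    have h1 := Finset.card_le_card hIcc
    have h2 := Finset.card_image_le (s := M) (f := lv)
    rw [Nat.card_Icc] at h1
    omega
  -- stability
  refine ⟨M, hMsub, ?_, hMk⟩
  have hsub1 : (↑M : Set α) ⊆ LM (reduct P ↑M) := by
    have key : ∀ i, ∀ q ∈ M, lv q = i → q ∈ LM (reduct P ↑M) := by
      intro i
      induction i using Nat.strong_induction_on with
      | _ i ih =>
        intro q hq hlvq
        obtain ⟨hq1, hqk, hqci⟩ := hlv_mem q hq
        obtain ⟨r, hrP, hhead, hsat⟩ := (hF4 q (hMatoms q hq) (lv q) hq1 hqk).mp hqci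
        by_cases h1 : lv q = 1
        · rw [SatF3, if_pos h1] at hsat
          obtain ⟨hpos0, hneg⟩ := hsat
          have hhorn : r.horn ∈ reduct P ↑M := reduct_mem hrP (hnegM r hrP hneg)
          have : r.horn.head ∈ LM (reduct P ↑M) :=
            LM_closed hhorn (by simp [LPRule.horn, hpos0])
          rwa [show r.horn.head = q from hhead] at this
        · rw [SatF3, if_neg h1] at hsat
          obtain ⟨hpos, hneg, hcm⟩ := hsat
          have hhorn : r.horn ∈ reduct P ↑M := reduct_mem hrP (hnegM r hrP hneg)
          have hposLM : (↑r.horn.pos : Set α) ⊆ LM (reduct P ↑M) := by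
            intro a ha
            have ha' : a ∈ r.pos := ha
            obtain ⟨haM, hle⟩ := hcmlv a (pos_mem_atomsP hrP ha') (lv q)
              (by omega) hqk (hpos a ha')
            exact ih (lv a) (by omega) a haM rfl
          have : r.horn.head ∈ LM (reduct P ↑M) := LM_closed hhorn hposLM
          rwa [show r.horn.head = q from hhead] at this
    intro q hq
    exact key (lv q) q hq rfl
  have hsub2 : LM (reduct P ↑M) ⊆ ↑M := by
    refine LM_subset ?_
    rintro r' ⟨r, ⟨hrP, hrneg⟩, rfl⟩ hposM
    have hposM' : ∀ a ∈ r.pos, a ∈ M := fun a ha => hposM ha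
    have hheadA : r.head ∈ atomsP P := head_mem_atomsP hrP
    have hnegc : ∀ b ∈ r.neg, EncAtom.c b ∉ (↑U : Set (EncAtom α)) := hnegU r hrP hrneg
    by_cases hpos0 : r.pos = ∅
    · have hs1 : SatF3 (↑U) r 1 := by
        rw [SatF3, if_pos rfl]; exact ⟨hpos0, hnegc⟩
      have hci1 : EncAtom.ci r.head 1 ∈ U :=
        (hF4 r.head hheadA 1 le_rfl (by omega)).mpr ⟨r, hrP, rfl, hs1⟩
      exact (hmemM r.head).mpr ⟨hheadA, (hF2 r.head hheadA).mpr ⟨1, le_rfl, by omega, hci1⟩⟩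
    · -- some positive atom exists, so k ≥ 1
      obtain ⟨a0, ha0⟩ := Finset.nonempty_iff_ne_empty.mpr hpos0
      have hk1 : 1 ≤ k := le_trans ((hlv_mem a0 (hposM' a0 ha0)).1) (hlvk a0 (hposM' a0 ha0))
      by_cases hcmh : EncAtom.cm r.head (k + 1) ∈ U
      · obtain ⟨j, hj1, hj2, hjci⟩ := (hF1 r.head hheadA (k + 1) (by omega) le_rfl).mp hcmh
        exact (hmemM r.head).mpr ⟨hheadA,
          (hF2 r.head hheadA).mpr ⟨j, hj1, by omega, hjci⟩⟩
      · have hs : SatF3 (↑U) r (k + 1) := by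
          rw [SatF3, if_neg (by omega)]
          refine ⟨?_, hnegc, hcmh⟩
          intro a ha
          have haM := hposM' a ha
          obtain ⟨ha1, _, haci⟩ := hlv_mem a haM
          refine (hF1 a (pos_mem_atomsP hrP ha) (k + 1) (by omega) le_rfl).mpr ?_
          exact ⟨lv a, ha1, by have := hlvk a haM; omega, haci⟩
        have hci : EncAtom.ci r.head (k + 1) ∈ U :=
          (hF4 r.head hheadA (k + 1) (by omega) le_rfl).mpr ⟨r, hrP, rfl, hs⟩
        exact (hmemM r.head).mpr ⟨hheadA,
          (hF2 r.head hheadA).mpr ⟨k + 1, by omega, le_rfl, hci⟩⟩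
  exact le_antisymm hsub1 hsub2

/-- `P` has a stable model of size at most `k` iff the theory `T(P)` has a
model of size at most `(k+1)(k²+2k)`. -/
theorem small_stable_iff_small_model (k : ℕ) (P : LProgram α) :
    (∃ M : Finset α, (↑M : Set α) ⊆ ↑(atomsP P) ∧ isStable P ↑M ∧ M.card ≤ k) ↔
      (∃ U : Finset (EncAtom α), ModelT k P ↑U ∧
        U.card ≤ (k + 1) * (k ^ 2 + 2 * k)) := by
  constructor
  · rintro ⟨M, hsub, hst, hc⟩
    exact forward hst hc
  · rintro ⟨U, hmod, hc⟩
    exact backward hmod hc
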